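/- Let Ω ⊆ ℂ be non-empty and closed, A ∈ ℂ^{n×n}, and suppose U ∈ U(n) is a global minimizer of f(U) = ‖L(U*AU)‖_F², where L(Â) has entries L_{ij} = 0 for i<j, L_{ii} = Â_{ii} − p_Ω(Â_{ii}), L_{ij} = Â_{ij} for i>j. Then B = U T U*, with T = U*AU − L(U*AU), has all eigenvalues in Ω and minimizes ‖A − X‖_F² over all matrices X with spectrum in Ω. -/

import Mathlib

/-!
Unitary conjugation preserves both the spectrum and the Frobenius norm. Given `X` with spectrum in
`Ω`, pass to a Schur form `S = V*XV`: it is upper triangular with the eigenvalues of `X`, points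
of `Ω`, on its diagonal. Against `S`, the strictly lower part of `V*AV` costs the same and each
diagonal entry costs at least its distance to `Ω`, so `‖A - X‖_F² ≥ f(V) ≥ f(U)`. On the other
hand `A - B` is unitarily similar to `L(U*AU)`, so `‖A - B‖_F² = f(U)`, and `B` is similar to the
triangular `T` whose diagonal lies in `Ω`.
-/

open Matrix Module

namespace Matrix

variable {𝕜 : Type*} [RCLike 𝕜] {m n : Type*} [Fintype m] [Fintype n]

theorem ofReal_sum_sum_norm_sq_eq_trace (M : Matrix m n 𝕜) :
    ((∑ i, ∑ j, ‖M i j‖ ^ 2 : ℝ) : 𝕜) = (Mᴴ * M).trace := by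
  rw [trace, Finset.sum_comm]
  push_cast
  refine Finset.sum_congr rfl fun j _ => Finset.sum_congr rfl fun i _ => ?_
  rw [← RCLike.conj_mul]
  rfl

theorem sum_sum_norm_sq_star_mul_mul [DecidableEq n] {V : Matrix n n 𝕜}
    (hV : V ∈ unitaryGroup n 𝕜) (M : Matrix n n 𝕜) :
    ∑ i, ∑ j, ‖(star V * M * V) i j‖ ^ 2 = ∑ i, ∑ j, ‖M i j‖ ^ 2 := by
  apply RCLike.ofReal_injective (K := 𝕜)
  rw [ofReal_sum_sum_norm_sq_eq_trace, ofReal_sum_sum_norm_sq_eq_trace]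
  have hVV : V * star V = 1 := Unitary.mul_star_self_of_mem hV
  calc ((star V * M * V)ᴴ * (star V * M * V)).trace
      = (star V * (Mᴴ * M) * V).trace := by
        simp only [← star_eq_conjTranspose, star_mul, star_star, mul_assoc]
        rw [← mul_assoc V, hVV, one_mul]
    _ = (Mᴴ * M).trace := by
        rw [mul_assoc, trace_mul_comm, mul_assoc, hVV, mul_one]

end Matrix

theorem spectrum.mul_mul_star_of_mem_unitary {R A : Type*} [CommSemiring R] [Ring A] [StarMul A]
    [Algebra R A] {U : A} (hU : U ∈ unitary A) (a : A) :
    spectrum R (U * a * star U) = spectrum R a :=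
  spectrum.units_conjugate (u := Unitary.toUnits ⟨U, hU⟩)

theorem Matrix.IsUpperTriangular.spectrum_eq {K n : Type*} [Field K] [Fintype n] [DecidableEq n]
    [LinearOrder n] {M : Matrix n n K} (hM : M.IsUpperTriangular) :
    spectrum K M = Set.range M.diag := by
  ext μ
  rw [mem_spectrum_iff_isRoot_charpoly, charpoly_of_isUpperTriangular M hM, Polynomial.IsRoot.def,
    Polynomial.eval_prod, Finset.prod_eq_zero_iff]
  simp [sub_eq_zero, eq_comm]

theorem Orthonormal.fin_cons {𝕜 E : Type*} [RCLike 𝕜] [NormedAddCommGroup E]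
    [InnerProductSpace 𝕜 E] {n : ℕ} {w : Fin n → E} (hw : Orthonormal 𝕜 w) {u : E}
    (hu : ‖u‖ = 1) (huw : ∀ i, inner 𝕜 u (w i) = 0) :
    Orthonormal 𝕜 (Fin.cons u w : Fin (n + 1) → E) := by
  rw [orthonormal_iff_ite] at hw ⊢
  intro i j
  cases i using Fin.cases <;> cases j using Fin.cases <;>
    simp [hu, huw, hw, inner_eq_zero_symm, inner_self_eq_norm_sq_to_K, (Fin.succ_ne_zero _).symm]

theorem OrthonormalBasis.toMatrix_apply_eq_inner {ι E : Type*} [Fintype ι] [DecidableEq ι]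
    [NormedAddCommGroup E] [InnerProductSpace ℂ E] (b : OrthonormalBasis ι ℂ E)
    (T : E →ₗ[ℂ] E) (i j : ι) :
    LinearMap.toMatrix b.toBasis b.toBasis T i j = inner ℂ (b i) (T (b j)) := by
  rw [LinearMap.toMatrix_apply, b.coe_toBasis, b.coe_toBasis_repr_apply, b.repr_apply_apply]

theorem LinearMap.exists_orthonormalBasis_toMatrix_isUpperTriangular {E : Type*}
    [NormedAddCommGroup E] [InnerProductSpace ℂ E] [FiniteDimensional ℂ E] {n : ℕ}
    (hn : finrank ℂ E = n) (T : E →ₗ[ℂ] E) :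
    ∃ b : OrthonormalBasis (Fin n) ℂ E,
      (LinearMap.toMatrix b.toBasis b.toBasis T).IsUpperTriangular := by
  induction n generalizing E with
  | zero => exact ⟨(stdOrthonormalBasis ℂ E).reindex (finCongr hn), fun i => i.elim0⟩
  | succ n ih =>
    have : Fact (finrank ℂ E = n + 1) := ⟨hn⟩
    have : Nontrivial E := Module.nontrivial_of_finrank_eq_succ hn
    obtain ⟨μ, hμ⟩ := Module.End.exists_eigenvalue T
    obtain ⟨v, hv⟩ := hμ.exists_hasEigenvector
    set u := (‖v‖⁻¹ : ℂ) • v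
    have hu : ‖u‖ = 1 := norm_smul_inv_norm hv.2
    have hu0 : u ≠ 0 := norm_ne_zero_iff.mp (hu ▸ one_ne_zero)
    have hTu : T u = μ • u := by rw [map_smul, hv.apply_eq_smul, smul_comm]
    -- triangularize the compression of `T` to the orthogonal complement of the eigenvector
    set K := (ℂ ∙ u)ᗮ
    obtain ⟨b', hb'⟩ := ih (Submodule.finrank_orthogonal_span_singleton hu0)
      (K.orthogonalProjectionOnto ∘ₗ T ∘ₗ K.subtype)
    have hon : Orthonormal ℂ (Fin.cons u (fun i => (b' i : E)) : Fin (n + 1) → E) :=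
      (b'.orthonormal.comp_linearIsometry K.subtypeₗᵢ).fin_cons hu
        fun i => Submodule.mem_orthogonal_singleton_iff_inner_right.mp (b' i).2
    set b := (basisOfOrthonormalOfCardEqFinrank hon (by simp [hn])).toOrthonormalBasis
      (by simpa using hon)
    have hb : ⇑b = Fin.cons u (fun i => (b' i : E)) := by simp [b]
    refine ⟨b, fun i j hij => ?_⟩
    rw [OrthonormalBasis.toMatrix_apply_eq_inner, hb]
    cases i using Fin.cases with
    | zero => exact absurd hij (Fin.not_lt_zero j)
    | succ i =>
      cases j using Fin.cases with
      | zero =>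
        simp [hTu, Submodule.mem_orthogonal_singleton_iff_inner_left.mp (b' i).2]
      | succ j =>
        have := hb' (Fin.succ_lt_succ_iff.mp hij)
        rw [OrthonormalBasis.toMatrix_apply_eq_inner] at this
        simp only [LinearMap.comp_apply, Submodule.subtype_apply,
          ContinuousLinearMap.coe_coe] at this
        rwa [Submodule.inner_orthogonalProjectionOnto_eq_of_mem_left] at this

theorem Matrix.exists_mem_unitaryGroup_isUpperTriangular {n : ℕ} (X : Matrix (Fin n) (Fin n) ℂ) :
    ∃ V ∈ unitaryGroup (Fin n) ℂ, (star V * X * V).IsUpperTriangular := by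
  obtain ⟨b, hb⟩ := (toLpLin 2 2 X).exists_orthonormalBasis_toMatrix_isUpperTriangular
    finrank_euclideanSpace_fin
  set V := (EuclideanSpace.basisFun (Fin n) ℂ).toBasis.toMatrix b
  refine ⟨V, (EuclideanSpace.basisFun _ ℂ).toMatrix_orthonormalBasis_mem_unitary b,
    fun i j hij => ?_⟩
  have hV : ∀ k l, V k l = b l k := fun k l => by simp [V, Basis.toMatrix_apply]
  have hentry : (star V * X * V) i j = inner ℂ (b i) (toLpLin 2 2 X (b j)) := by
    simp only [EuclideanSpace.inner_eq_star_dotProduct, toLpLin_apply, mul_apply, star_apply,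
      hV, dotProduct, mulVec, Finset.sum_mul]
    rw [Finset.sum_comm]
    exact Finset.sum_congr rfl fun _ _ => Finset.sum_congr rfl fun _ _ => by simp; ring
  rw [hentry, ← OrthonormalBasis.toMatrix_apply_eq_inner]
  exact hb hij

section LowerResidual

variable {α ι : Type*} [SeminormedAddCommGroup α] [LinearOrder ι]

def lowerResidual (p : α → α) (M : Matrix ι ι α) : Matrix ι ι α :=
  Matrix.of fun i j => if i < j then 0 else if i = j then M i i - p (M i i) else M i j

theorem isUpperTriangular_sub_lowerResidual (p : α → α) (M : Matrix ι ι α) :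
    (M - lowerResidual p M).IsUpperTriangular := fun i j (hij : j < i) => by
  simp [lowerResidual, not_lt.mpr hij.le, hij.ne']

theorem sub_lowerResidual_apply_self (p : α → α) (M : Matrix ι ι α) (i : ι) :
    (M - lowerResidual p M) i i = p (M i i) := by
  simp [lowerResidual]

theorem sum_sum_norm_sq_lowerResidual_le [Fintype ι] {Ω : Set α} {p : α → α}
    (hp : ∀ z, ∀ x ∈ Ω, ‖z - p z‖ ≤ ‖z - x‖) {S : Matrix ι ι α} (hS : S.IsUpperTriangular)
    (hSΩ : ∀ i, S i i ∈ Ω) (M : Matrix ι ι α) :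
    ∑ i, ∑ j, ‖lowerResidual p M i j‖ ^ 2 ≤ ∑ i, ∑ j, ‖M i j - S i j‖ ^ 2 := by
  refine Finset.sum_le_sum fun i _ => Finset.sum_le_sum fun j _ => ?_
  rcases lt_trichotomy i j with hij | rfl | hji
  · simp [lowerResidual, hij]
  · simpa [lowerResidual] using pow_le_pow_left₀ (norm_nonneg _) (hp _ _ (hSΩ i)) 2
  · simp [lowerResidual, not_lt.mpr hji.le, hji.ne', hS hji]

end LowerResidual

theorem stmt_2_general (n : ℕ) (Ω : Set ℂ)
    (p : ℂ → ℂ) (hp_mem : ∀ z, p z ∈ Ω)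
    (hp_near : ∀ z, ∀ x ∈ Ω, ‖z - p z‖ ≤ ‖z - x‖)
    (A : Matrix (Fin n) (Fin n) ℂ)
    (L : Matrix (Fin n) (Fin n) ℂ → Matrix (Fin n) (Fin n) ℂ)
    (hL : ∀ M : Matrix (Fin n) (Fin n) ℂ, ∀ i j : Fin n,
      L M i j = if i < j then 0 else if i = j then M i i - p (M i i) else M i j)
    (f : Matrix (Fin n) (Fin n) ℂ → ℝ)
    (hf : ∀ U, f U = ∑ i, ∑ j, ‖L (Uᴴ * A * U) i j‖ ^ 2)
    (U : Matrix (Fin n) (Fin n) ℂ) (hU : U ∈ Matrix.unitaryGroup (Fin n) ℂ)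
    (hmin : ∀ V ∈ Matrix.unitaryGroup (Fin n) ℂ, f U ≤ f V)
    (T B : Matrix (Fin n) (Fin n) ℂ)
    (hT : T = Uᴴ * A * U - L (Uᴴ * A * U))
    (hB : B = U * T * Uᴴ) :
    spectrum ℂ B ⊆ Ω ∧
    ∀ X : Matrix (Fin n) (Fin n) ℂ, spectrum ℂ X ⊆ Ω →
      ∑ i, ∑ j, ‖A i j - B i j‖ ^ 2 ≤
        ∑ i, ∑ j, ‖A i j - X i j‖ ^ 2 := by
  obtain rfl : L = lowerResidual p := funext fun M => Matrix.ext (hL M)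
  have hT_tri : T.IsUpperTriangular := hT ▸ isUpperTriangular_sub_lowerResidual p _
  refine ⟨?_, fun X hX => ?_⟩
  · rw [hB, ← star_eq_conjTranspose, spectrum.mul_mul_star_of_mem_unitary hU, hT_tri.spectrum_eq]
    rintro _ ⟨i, rfl⟩
    rw [diag_apply, hT, sub_lowerResidual_apply_self]
    exact hp_mem _
  obtain ⟨V, hV, hS⟩ := exists_mem_unitaryGroup_isUpperTriangular X
  have hSΩ : ∀ i, (star V * X * V) i i ∈ Ω := fun i => hX <| by
    rw [← spectrum.mul_mul_star_of_mem_unitary (Unitary.star_mem hV) X, star_star,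
      hS.spectrum_eq]
    exact ⟨i, rfl⟩
  have hAB : star U * (A - B) * U = lowerResidual p (Uᴴ * A * U) := by
    have hUU : star U * U = 1 := Unitary.star_mul_self_of_mem hU
    calc star U * (A - B) * U = Uᴴ * A * U - (star U * U) * T * (star U * U) := by
          simp only [hB, mul_sub, sub_mul, mul_assoc, star_eq_conjTranspose]
      _ = lowerResidual p (Uᴴ * A * U) := by rw [hUU, one_mul, mul_one, hT, sub_sub_cancel]
  calc ∑ i, ∑ j, ‖A i j - B i j‖ ^ 2 = f U := by
        rw [hf, ← hAB, sum_sum_norm_sq_star_mul_mul hU]; rfl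
    _ ≤ f V := hmin V hV
    _ ≤ ∑ i, ∑ j, ‖(star V * A * V) i j - (star V * X * V) i j‖ ^ 2 :=
        hf V ▸ sum_sum_norm_sq_lowerResidual_le hp_near hS hSΩ _
    _ = ∑ i, ∑ j, ‖A i j - X i j‖ ^ 2 := by
        simpa [mul_sub, sub_mul] using sum_sum_norm_sq_star_mul_mul hV (A - X)

/-- If U globally minimizes ‖L(U*AU)‖_F² over the unitary group, then B = U T U*, with
T the triangular projection of U*AU, is a global minimizer of the nearest Ω-stable
matrix problem. -/
theorem stmt_2 (n : ℕ) (Ω : Set ℂ) (hΩne : Ω.Nonempty) (hΩcl : IsClosed Ω)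
    (p : ℂ → ℂ) (hp_mem : ∀ z, p z ∈ Ω)
    (hp_near : ∀ z, ∀ x ∈ Ω, ‖z - p z‖ ≤ ‖z - x‖)
    (A : Matrix (Fin n) (Fin n) ℂ)
    (L : Matrix (Fin n) (Fin n) ℂ → Matrix (Fin n) (Fin n) ℂ)
    (hL : ∀ M : Matrix (Fin n) (Fin n) ℂ, ∀ i j : Fin n,
      L M i j = if i < j then 0 else if i = j then M i i - p (M i i) else M i j)
    (f : Matrix (Fin n) (Fin n) ℂ → ℝ)
    (hf : ∀ U, f U = ∑ i, ∑ j, ‖L (Uᴴ * A * U) i j‖ ^ 2)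
    (U : Matrix (Fin n) (Fin n) ℂ) (hU : U ∈ Matrix.unitaryGroup (Fin n) ℂ)
    (hmin : ∀ V ∈ Matrix.unitaryGroup (Fin n) ℂ, f U ≤ f V)
    (T B : Matrix (Fin n) (Fin n) ℂ)
    (hT : T = Uᴴ * A * U - L (Uᴴ * A * U))
    (hB : B = U * T * Uᴴ) :
    spectrum ℂ B ⊆ Ω ∧
    ∀ X : Matrix (Fin n) (Fin n) ℂ, spectrum ℂ X ⊆ Ω →
      ∑ i, ∑ j, ‖A i j - B i j‖ ^ 2 ≤
        ∑ i, ∑ j, ‖A i j - X i j‖ ^ 2 :=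
  stmt_2_general n Ω p hp_mem hp_near A L hL f hf U hU hmin T B hT hB
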